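/- arXiv:2204.07165 — 2 statements merged into one kernel-verified Lean document; each statement's English description precedes it below -/
import Mathlib

section
/- Let m ≥ 1 and let M be the Chein double M(G,2) of the dicyclic group G = QuaternionGroup m, with c the unique element of order 2 of G. Then M contains exactly one element z with z ≠ (1,0) and z·z = (1,0), namely z = (c,0). -/
/-! In the Chein double `(g, 0)² = (g², 0)` and `(g, 1)² = (c, 0)`, so for `c ≠ 1` its involutions
are exactly the `(g, 0)` with `g` an involution of `G`. In `QuaternionGroup n` every `xa i` squares
to `a n ≠ 1`, and `a i` squares to `1` iff `2i = 0` in `ZMod (2n)`, i.e. `i ∈ {0, n}`. -/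

namespace PowerGraphPaper

variable {M : Type*}

/-- Iterated power with respect to a binary operation `mul` and identity `one`:
`x ^ 0 = 1` and `x ^ (k+1) = x * x ^ k`. -/
def opow (mul : M → M → M) (one : M) (x : M) : ℕ → M
  | 0 => one
  | k + 1 => mul x (opow mul one x k)

/-- The order of an element: the least `k > 0` with `x ^ k = 1` (and `0` if there is none). -/
noncomputable def oorder (mul : M → M → M) (one : M) (x : M) : ℕ :=
  sInf {k : ℕ | 0 < k ∧ opow mul one x k = one}

/-- The inverse of an element of a finite power-associative loop: `x ^ (|x| - 1)`. -/
noncomputable def oinv (mul : M → M → M) (one : M) (x : M) : M :=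
  opow mul one x (oorder mul one x - 1)

/-- A subloop: a subset containing the identity and closed under multiplication and inverses. -/
def IsSubloop (mul : M → M → M) (one : M) (S : Set M) : Prop :=
  one ∈ S ∧ (∀ x ∈ S, ∀ y ∈ S, mul x y ∈ S) ∧ ∀ x ∈ S, oinv mul one x ∈ S

/-- The multiplication is associative on the subset `S`. -/
def IsAssocOn (mul : M → M → M) (S : Set M) : Prop :=
  ∀ x ∈ S, ∀ y ∈ S, ∀ z ∈ S, mul (mul x y) z = mul x (mul y z)

/-- The multiplication is commutative on the subset `S`. -/
def IsCommOn (mul : M → M → M) (S : Set M) : Prop :=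
  ∀ x ∈ S, ∀ y ∈ S, mul x y = mul y x

/-- A subset is cyclic if it is the set of powers of one of its elements. -/
def IsCyclicSubloop (mul : M → M → M) (one : M) (S : Set M) : Prop :=
  ∃ g ∈ S, S = {y | ∃ k : ℕ, opow mul one g k = y}

/-- A loop structure on a type `M`: a binary operation all of whose left and right
translations are bijections, together with a two-sided identity. -/
structure LoopStr (M : Type*) where
  mul : M → M → M
  one : M
  mulLeft_bijective : ∀ a, Function.Bijective (mul a)
  mulRight_bijective : ∀ a, Function.Bijective (fun x => mul x a)
  one_mul : ∀ x, mul one x = x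
  mul_one : ∀ x, mul x one = x

namespace LoopStr

/-- The Moufang identity `z(x(zy)) = ((zx)z)y`. -/
def IsMoufang (L : LoopStr M) : Prop :=
  ∀ x y z, L.mul z (L.mul x (L.mul z y)) = L.mul (L.mul (L.mul z x) z) y

/-- Powers in a loop. -/
def pow (L : LoopStr M) : M → ℕ → M := opow L.mul L.one

/-- Order of an element of a loop. -/
noncomputable def order (L : LoopStr M) : M → ℕ := oorder L.mul L.one

/-- Inverse of an element of a loop. -/
noncomputable def inv (L : LoopStr M) : M → M := oinv L.mul L.one

/-- The multiplication of the loop is associative. -/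
def IsAssociative (L : LoopStr M) : Prop :=
  ∀ x y z, L.mul (L.mul x y) z = L.mul x (L.mul y z)

/-- `M` is a cyclic group: the multiplication is associative and some element has
every element as a power. -/
def IsCyclicGroup (L : LoopStr M) : Prop :=
  L.IsAssociative ∧ ∃ g, ∀ x, ∃ k : ℕ, L.pow g k = x

/-- `M` is a group isomorphic to a generalized quaternion group
`QuaternionGroup (2 ^ k)` (of order `2 ^ (k + 2)`) for some `k ≥ 1`. -/
def IsGeneralizedQuaternion (L : LoopStr M) : Prop :=
  ∃ k : ℕ, 1 ≤ k ∧ ∃ φ : M ≃ QuaternionGroup (2 ^ k),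
    ∀ x y, φ (L.mul x y) = φ x * φ y

/-- `M` is a generalized octonion loop: it is nonassociative and every associative
commutative subloop is cyclic. -/
def IsGeneralizedOctonion (L : LoopStr M) : Prop :=
  ¬ L.IsAssociative ∧ ∀ S : Set M, IsSubloop L.mul L.one S →
    IsAssocOn L.mul S → IsCommOn L.mul S → IsCyclicSubloop L.mul L.one S

/-- The undirected power graph of a loop: distinct `x` and `y` are adjacent iff one
is a power of the other. -/
def powerGraph (L : LoopStr M) : SimpleGraph M where
  Adj x y := x ≠ y ∧ ∃ k : ℕ, L.pow x k = y ∨ L.pow y k = x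
  symm := ⟨by
    rintro x y ⟨hne, k, hk⟩
    exact ⟨hne.symm, k, hk.symm⟩⟩
  loopless := ⟨fun x h => h.1 rfl⟩

/-- The left translation by `a`, as a permutation. -/
noncomputable def leftTrans (L : LoopStr M) (a : M) : Equiv.Perm M :=
  Equiv.ofBijective _ (L.mulLeft_bijective a)

/-- The right translation by `a`, as a permutation. -/
noncomputable def rightTrans (L : LoopStr M) (a : M) : Equiv.Perm M :=
  Equiv.ofBijective _ (L.mulRight_bijective a)

/-- The multiplication group of a loop: the group of permutations generated by all
left and right translations. -/
noncomputable def multGroup (L : LoopStr M) : Subgroup (Equiv.Perm M) :=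
  Subgroup.closure (Set.range L.leftTrans ∪ Set.range L.rightTrans)

/-- An inner mapping: an element of the multiplication group fixing the identity. -/
def IsInnerMapping (L : LoopStr M) (φ : Equiv.Perm M) : Prop :=
  φ ∈ L.multGroup ∧ φ L.one = L.one

end LoopStr

/-- The multiplication of the Chein double `M(G, 2)` of a group `G` with respect to a
central element `c ≠ 1`. -/
def cheinMul {G : Type*} [Group G] (c : G) (x y : G × ZMod 2) : G × ZMod 2 :=
  if x.2 = 0 then
    if y.2 = 0 then (x.1 * y.1, 0) else (y.1 * x.1, 1)
  else
    if y.2 = 0 then (x.1 * y.1⁻¹, 1) else (c * y.1⁻¹ * x.1, 0)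

/-- The unique element of order `2` of the dicyclic group `QuaternionGroup m`
(for `m ≥ 1`), namely `a ^ m`. -/
def quatC (m : ℕ) : QuaternionGroup m := QuaternionGroup.a (m : ZMod (2 * m))

theorem natCast_ne_zero_zmod_two_mul {n : ℕ} [NeZero n] : (n : ZMod (2 * n)) ≠ 0 := by
  rw [Ne, ZMod.natCast_eq_zero_iff]
  intro h
  have := Nat.le_of_dvd (Nat.pos_of_neZero n) h
  have := NeZero.ne n
  omega

theorem zmod_add_self_eq_zero_iff {n : ℕ} [NeZero n] (i : ZMod (2 * n)) :
    i + i = 0 ↔ i = 0 ∨ i = n := by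
  obtain ⟨k, hk, rfl⟩ : ∃ k < 2 * n, (k : ZMod (2 * n)) = i :=
    ⟨i.val, ZMod.val_lt i, ZMod.natCast_zmod_val i⟩
  have hk0 : 2 * n ∣ k ↔ k = 0 :=
    ⟨fun h => Nat.eq_zero_of_dvd_of_lt h hk, fun h => h ▸ dvd_zero _⟩
  rw [← Nat.cast_add, ZMod.natCast_eq_zero_iff, ZMod.natCast_eq_zero_iff, hk0,
    ZMod.natCast_eq_natCast_iff', Nat.mod_eq_of_lt hk, Nat.mod_eq_of_lt (by omega)]
  constructor
  · rintro ⟨q, hq⟩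
    have : q < 2 := by nlinarith
    interval_cases q <;> omega
  · rintro (rfl | rfl)
    exacts [dvd_zero _, ⟨1, by ring⟩]

theorem quaternionGroup_a_natCast_ne_one {n : ℕ} [NeZero n] :
    QuaternionGroup.a (n : ZMod (2 * n)) ≠ 1 := by
  rw [QuaternionGroup.one_def, Ne, QuaternionGroup.a.injEq]
  exact natCast_ne_zero_zmod_two_mul

theorem quaternionGroup_mul_self_eq_one_iff {n : ℕ} [NeZero n] (g : QuaternionGroup n) :
    g * g = 1 ↔ g = 1 ∨ g = QuaternionGroup.a n := by
  rcases g with i | i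
  · simp only [QuaternionGroup.one_def, QuaternionGroup.a_mul_a, QuaternionGroup.a.injEq,
      zmod_add_self_eq_zero_iff]
  · simp [-QuaternionGroup.a_zero, QuaternionGroup.one_def, QuaternionGroup.xa_mul_xa,
      natCast_ne_zero_zmod_two_mul]

theorem quaternionGroup_involutions (n : ℕ) [NeZero n] :
    {g : QuaternionGroup n | g ≠ 1 ∧ g * g = 1} = {QuaternionGroup.a n} := by
  ext g
  rw [Set.mem_ofPred_eq, quaternionGroup_mul_self_eq_one_iff, Set.mem_singleton_iff]
  have := quaternionGroup_a_natCast_ne_one (n := n)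
  grind

section CheinDouble

variable {G : Type*} [Group G]

@[simp]
theorem cheinMul_mk_zero_self (c g : G) : cheinMul c (g, 0) (g, 0) = (g * g, 0) := by
  simp [cheinMul]

@[simp]
theorem cheinMul_mk_one_self (c g : G) : cheinMul c (g, 1) (g, 1) = (c, 0) := by
  simp [cheinMul]

theorem cheinMul_involutions {c : G} (hc : c ≠ 1) :
    {z : G × ZMod 2 | z ≠ (1, 0) ∧ cheinMul c z z = (1, 0)} =
      (fun g => (g, (0 : ZMod 2))) '' {g | g ≠ 1 ∧ g * g = 1} := by
  ext ⟨g, e⟩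
  obtain rfl | rfl : e = 0 ∨ e = 1 := by revert e; decide
  · simp
  · simp [hc]

end CheinDouble

end PowerGraphPaper

/-- **Lemma.** The Chein double `M(Q_{4m}, 2)` of a dicyclic group contains a unique
element of order `2`, namely the image `(c, 0)` of the unique element of order `2`
of `Q_{4m}`. -/
theorem PowerGraphPaper.chein_double_unique_involution
    (m : ℕ) (hm : 1 ≤ m) :
    {z : QuaternionGroup m × ZMod 2 |
        z ≠ ((1 : QuaternionGroup m), (0 : ZMod 2)) ∧
        cheinMul (quatC m) z z = ((1 : QuaternionGroup m), (0 : ZMod 2))} =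
      {((quatC m, 0) : QuaternionGroup m × ZMod 2)} := by
  have : NeZero m := ⟨by omega⟩
  rw [cheinMul_involutions (c := quatC m) quaternionGroup_a_natCast_ne_one,
    quaternionGroup_involutions, Set.image_singleton]
  rfl
end

section
/- Let k ≥ 1 and let M be the Chein double M(QuaternionGroup (2^k), 2). Then every subloop of M on which the multiplication is associative and commutative is cyclic, i.e., equals the set of powers of one of its elements. -/
/-! In `M(G, 2)` the elements `(h, 0)` and `(g, 1)` commute iff `h⁻¹ = h`. So if a commutative
subloop contains some `(g, 1)`, its elements `(h, 0)` have `h ∈ {1, c}`, `c` being the only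
involution of a generalized quaternion group, and multiplying by `(g, 1)` leaves only `(g, 1)` and
`(g * c, 1)` for the others: the subloop is `{1, (g, 1), (c, 0), (g * c, 1)}`, the powers of
`(g, 1)`. Otherwise it is a commutative subgroup of `G × {0} ≅ G`, and a commutative subgroup of a
dicyclic group is cyclic: it lies either in `⟨a⟩` or in the centralizer `⟨xa i⟩` of one of its
elements `xa i`. -/

namespace ZMod

theorem natCast_add_self_eq_zero {n : ℕ} : (n : ZMod (2 * n)) + n = 0 := by
  rw [← Nat.cast_add, natCast_eq_zero_iff, ← two_mul]

theorem add_self_eq_zero_iff {n : ℕ} [NeZero n] {j : ZMod (2 * n)} :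
    j + j = 0 ↔ j = 0 ∨ j = n := by
  constructor
  · intro h
    rw [← natCast_zmod_val j, ← Nat.cast_add, natCast_eq_zero_iff, ← two_mul,
      Nat.mul_dvd_mul_iff_left two_pos] at h
    obtain ⟨t, ht⟩ := h
    have ht2 : t < 2 := Nat.lt_of_mul_lt_mul_left (a := n) (by linarith [val_lt j])
    interval_cases t
    · left; rw [← val_eq_zero, ht, mul_zero]
    · right; rw [← natCast_zmod_val j, ht, mul_one]
  · rintro (rfl | rfl)
    exacts [add_zero 0, natCast_add_self_eq_zero]

theorem natCast_ne_zero_two_mul {n : ℕ} [NeZero n] : (n : ZMod (2 * n)) ≠ 0 := by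
  have hn := Nat.pos_of_neZero n
  rw [Ne, natCast_eq_zero_iff]
  exact Nat.not_dvd_of_pos_of_lt hn (by omega)

end ZMod

namespace QuaternionGroup

variable {n : ℕ}

theorem inv_a (i : ZMod (2 * n)) : (a i)⁻¹ = a (-i) := rfl

theorem inv_xa (i : ZMod (2 * n)) : (xa i)⁻¹ = xa ((n : ZMod (2 * n)) + i) := rfl

theorem eq_one_or_eq_a_of_inv_eq_self [NeZero n] {g : QuaternionGroup n} (hg : g⁻¹ = g) :
    g = 1 ∨ g = a n := by
  rcases g with j | j
  · rw [inv_a, a.injEq, neg_eq_iff_add_eq_zero, ZMod.add_self_eq_zero_iff] at hg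
    rcases hg with rfl | rfl
    exacts [Or.inl rfl, Or.inr rfl]
  · rw [inv_xa, xa.injEq, add_eq_right] at hg
    exact absurd hg ZMod.natCast_ne_zero_two_mul

theorem mem_zpowers_xa_of_commute [NeZero n] {i : ZMod (2 * n)} {g : QuaternionGroup n}
    (hg : Commute (xa i) g) : g ∈ Subgroup.zpowers (xa i) := by
  rcases g with j | j
  · have hj : j + j = 0 := by
      have := hg.eq
      rw [xa_mul_a, a_mul_xa, xa.injEq] at this
      linear_combination this
    rcases ZMod.add_self_eq_zero_iff.1 hj with rfl | rfl
    · exact Subgroup.one_mem _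
    · exact ⟨2, xa_sq i⟩
  · have hj : (j - i) + (j - i) = 0 := by
      have := hg.eq
      rw [xa_mul_xa, xa_mul_xa, a.injEq] at this
      linear_combination this
    rcases ZMod.add_self_eq_zero_iff.1 hj with h | h
    · rw [sub_eq_zero.1 h]; exact Subgroup.mem_zpowers _
    · have h3 : xa i ^ 3 = xa j := by
        rw [pow_succ, xa_sq, a_mul_xa, xa.injEq]
        linear_combination -h - ZMod.natCast_add_self_eq_zero
      exact h3 ▸ Subgroup.npow_mem_zpowers _ 3

theorem isCyclic_of_commute [NeZero n] (H : Subgroup (QuaternionGroup n))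
    (hH : ∀ x ∈ H, ∀ y ∈ H, Commute x y) : IsCyclic H := by
  by_cases hxa : ∃ i, xa i ∈ H
  · obtain ⟨i, hi⟩ := hxa
    exact Subgroup.isCyclic_of_le fun g hg => mem_zpowers_xa_of_commute (hH _ hi _ hg)
  · refine Subgroup.isCyclic_of_le (H' := Subgroup.zpowers (a 1)) ?_
    rintro (j | j) hj
    · rw [← ZMod.natCast_zmod_val j, ← a_one_pow]
      exact Subgroup.npow_mem_zpowers _ _
    · exact absurd ⟨j, hj⟩ hxa

end QuaternionGroup

namespace PowerGraphPaper

theorem exists_eq_powers_of_commute {G : Type*} [Group G] [Finite G]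
    (hG : ∀ H : Subgroup G, (∀ x ∈ H, ∀ y ∈ H, Commute x y) → IsCyclic H) {T : Set G}
    (hone : 1 ∈ T) (hmul : ∀ x ∈ T, ∀ y ∈ T, x * y ∈ T)
    (hcomm : ∀ x ∈ T, ∀ y ∈ T, Commute x y) : ∃ g ∈ T, T = {y | ∃ j : ℕ, g ^ j = y} := by
  let H : Subgroup G :=
    { carrier := T
      one_mem' := hone
      mul_mem' := fun hx hy => hmul _ hx _ hy
      inv_mem' := fun {x} hx => by
        have hpow : ∀ j : ℕ, x ^ j ∈ T := fun j => by
          induction j with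
          | zero => exact pow_zero x ▸ hone
          | succ j ih => exact pow_succ x j ▸ hmul _ ih _ hx
        obtain ⟨j, hj⟩ := mem_powers_iff_mem_zpowers.2 (inv_mem (Subgroup.mem_zpowers x))
        exact hj ▸ hpow j }
  obtain ⟨g, hg⟩ := (H.isCyclic_iff_exists_zpowers_eq_top).1 (hG H hcomm)
  have hgH : g ∈ H := hg ▸ Subgroup.mem_zpowers g
  refine ⟨g, hgH, Set.ext fun y => ?_⟩
  exact (SetLike.ext_iff.1 hg y).symm.trans
    (mem_powers_iff_mem_zpowers.symm.trans (Submonoid.mem_powers_iff _ _))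

theorem quatC_inv (n : ℕ) : (quatC n)⁻¹ = quatC n :=
  congrArg QuaternionGroup.a (neg_eq_iff_add_eq_zero.2 ZMod.natCast_add_self_eq_zero)

theorem opow_mem {M : Type*} {mul : M → M → M} {one : M} {S : Set M} (hone : one ∈ S)
    (hmul : ∀ x ∈ S, ∀ y ∈ S, mul x y ∈ S) {x : M} (hx : x ∈ S) :
    ∀ j, opow mul one x j ∈ S
  | 0 => hone
  | j + 1 => hmul _ hx _ (opow_mem hone hmul hx j)

section CheinDouble

variable {G : Type*} [Group G] {c : G}

@[simp] theorem cheinMul_mk_zero_mk_zero (g h : G) :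
    cheinMul c (g, 0) (h, 0) = (g * h, 0) := by
  simp [cheinMul]

@[simp] theorem cheinMul_mk_zero_mk_one (g h : G) :
    cheinMul c (g, 0) (h, 1) = (h * g, 1) := by
  simp [cheinMul]

@[simp] theorem cheinMul_mk_one_mk_zero (g h : G) :
    cheinMul c (g, 1) (h, 0) = (g * h⁻¹, 1) := by
  simp [cheinMul]

@[simp] theorem cheinMul_mk_one_mk_one (g h : G) :
    cheinMul c (g, 1) (h, 1) = (c * h⁻¹ * g, 0) := by
  simp [cheinMul]

theorem opow_cheinMul_mk_zero (g : G) :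
    ∀ j : ℕ, opow (cheinMul c) (1, 0) (g, 0) j = (g ^ j, 0)
  | 0 => by rw [opow, pow_zero]
  | j + 1 => by rw [opow, opow_cheinMul_mk_zero g j, cheinMul_mk_zero_mk_zero, ← pow_succ']

variable {S : Set (G × ZMod 2)}

theorem isCyclicSubloop_of_mk_one_mem (hc : c⁻¹ = c)
    (hinv : ∀ h : G, h⁻¹ = h → h = 1 ∨ h = c) (hone : (1, 0) ∈ S)
    (hmul : ∀ x ∈ S, ∀ y ∈ S, cheinMul c x y ∈ S) (hcomm : IsCommOn (cheinMul c) S)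
    {g : G} (hg : (g, 1) ∈ S) : IsCyclicSubloop (cheinMul c) (1, 0) S := by
  have even : ∀ h, (h, 0) ∈ S → h = 1 ∨ h = c := fun h hh => by
    have := hcomm _ hh _ hg
    simp only [cheinMul_mk_zero_mk_one, cheinMul_mk_one_mk_zero, Prod.mk.injEq, and_true,
      mul_left_cancel_iff] at this
    exact hinv h this.symm
  have odd : ∀ h, (h, 1) ∈ S → h = g ∨ h = g * c := fun h hh => by
    rcases even _ (by simpa using hmul _ hg _ hh) with h1 | h1
    · right
      have := congrArg (·⁻¹) (mul_eq_one_iff_eq_inv.1 h1)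
      simp only [mul_inv_rev, inv_inv] at this
      exact mul_inv_eq_iff_eq_mul.1 this
    · left
      rw [mul_assoc, mul_eq_left, inv_mul_eq_one] at h1
      exact h1
  refine ⟨(g, 1), hg, Set.Subset.antisymm ?_ ?_⟩
  · rintro ⟨h, e⟩ hh
    rcases (by decide : ∀ t : ZMod 2, t = 0 ∨ t = 1) e with rfl | rfl
    · rcases even h hh with rfl | rfl
      exacts [⟨0, rfl⟩, ⟨2, by simp [opow]⟩]
    · rcases odd h hh with rfl | rfl
      exacts [⟨1, by simp [opow]⟩, ⟨3, by simp [opow, hc]⟩]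
  · rintro _ ⟨j, rfl⟩
    exact opow_mem hone hmul hg j

theorem isCyclicSubloop_of_forall_snd_eq_zero [Finite G]
    (hG : ∀ H : Subgroup G, (∀ x ∈ H, ∀ y ∈ H, Commute x y) → IsCyclic H) (hone : (1, 0) ∈ S)
    (hmul : ∀ x ∈ S, ∀ y ∈ S, cheinMul c x y ∈ S) (hcomm : IsCommOn (cheinMul c) S)
    (hS : ∀ x ∈ S, x.2 = 0) : IsCyclicSubloop (cheinMul c) (1, 0) S := by
  have hmem : ∀ x ∈ S, (x.1, 0) ∈ S := fun x hx => by rw [← hS x hx]; exact hx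
  obtain ⟨g, hg, hT⟩ := exists_eq_powers_of_commute hG (T := {g | (g, 0) ∈ S}) hone
    (fun x hx y hy => by simpa using hmul _ hx _ hy)
    (fun x hx y hy => (by simpa using hcomm _ hx _ hy : x * y = y * x))
  refine ⟨(g, 0), hg, Set.ext fun x => ⟨fun hx => ?_, ?_⟩⟩
  · obtain ⟨j, hj⟩ := hT.subset (hmem x hx)
    exact ⟨j, by rw [opow_cheinMul_mk_zero, hj, ← hS x hx]⟩
  · rintro ⟨j, rfl⟩
    exact opow_mem hone hmul hg j

theorem isCyclicSubloop_cheinMul [Finite G] (hc : c⁻¹ = c)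
    (hinv : ∀ h : G, h⁻¹ = h → h = 1 ∨ h = c)
    (hG : ∀ H : Subgroup G, (∀ x ∈ H, ∀ y ∈ H, Commute x y) → IsCyclic H)
    (hS : IsSubloop (cheinMul c) (1, 0) S) (hcomm : IsCommOn (cheinMul c) S) :
    IsCyclicSubloop (cheinMul c) (1, 0) S := by
  obtain ⟨hone, hmul, -⟩ := hS
  by_cases hodd : ∃ g, (g, 1) ∈ S
  · obtain ⟨g, hg⟩ := hodd
    exact isCyclicSubloop_of_mk_one_mem hc hinv hone hmul hcomm hg
  · refine isCyclicSubloop_of_forall_snd_eq_zero hG hone hmul hcomm fun ⟨g, e⟩ hx => ?_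
    rcases (by decide : ∀ t : ZMod 2, t = 0 ∨ t = 1) e with rfl | rfl
    exacts [rfl, absurd ⟨g, hx⟩ hodd]

end CheinDouble

end PowerGraphPaper

theorem PowerGraphPaper.chein_double_assoc_comm_subloop_cyclic_general
    (k : ℕ)
    (S : Set (QuaternionGroup (2 ^ k) × ZMod 2))
    (hS : IsSubloop (cheinMul (quatC (2 ^ k)))
      ((1 : QuaternionGroup (2 ^ k)), (0 : ZMod 2)) S)
    (hcomm : IsCommOn (cheinMul (quatC (2 ^ k))) S) :
    IsCyclicSubloop (cheinMul (quatC (2 ^ k)))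
      ((1 : QuaternionGroup (2 ^ k)), (0 : ZMod 2)) S :=
  isCyclicSubloop_cheinMul (quatC_inv _) (fun _ => QuaternionGroup.eq_one_or_eq_a_of_inv_eq_self)
    QuaternionGroup.isCyclic_of_commute hS hcomm

/-- **Theorem.** In the Chein double `M(QuaternionGroup (2^k), 2)`, every subloop on
which the multiplication is associative and commutative is cyclic. -/
theorem PowerGraphPaper.chein_double_assoc_comm_subloop_cyclic
    (k : ℕ) (hk : 1 ≤ k)
    (S : Set (QuaternionGroup (2 ^ k) × ZMod 2))
    (hS : IsSubloop (cheinMul (quatC (2 ^ k)))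
      ((1 : QuaternionGroup (2 ^ k)), (0 : ZMod 2)) S)
    (hassoc : IsAssocOn (cheinMul (quatC (2 ^ k))) S)
    (hcomm : IsCommOn (cheinMul (quatC (2 ^ k))) S) :
    IsCyclicSubloop (cheinMul (quatC (2 ^ k)))
      ((1 : QuaternionGroup (2 ^ k)), (0 : ZMod 2)) S :=
  PowerGraphPaper.chein_double_assoc_comm_subloop_cyclic_general k S hS hcomm
end
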